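/- arXiv:2001.04328 — 2 statements merged into one kernel-verified Lean document; each statement's English description precedes it below -/
import Mathlib

section
/- In the negative definite E8 lattice, the number of roots orthogonal to both v_1 = (1,-1,0,0,0,0,0,0) and v_2 = (0,1,1,2,0,0,0,0) is exactly 40; specifically they are the vectors δ_{±i,±j} with i,j ≥ 5 (24 vectors) and the vectors ±δ'_S with all entries ±1/2, sign pattern determined by a subset S of even cardinality with 1,2,3 ∈ S and 4 ∉ S (16 vectors). -/
/-- The `E₈` lattice: vectors in `ℚ⁸` with all coordinates integers or all
in `ℤ + 1/2`, and coordinate sum in `2ℤ`. -/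
def IsE8 (x : Fin 8 → ℚ) : Prop :=
  ((∀ i, ∃ n : ℤ, x i = n) ∨ (∀ i, ∃ n : ℤ, x i = n + 1/2)) ∧
    ∃ m : ℤ, (∑ i, x i) = 2 * m

/-- The (negative definite) bilinear form on the `E₈` model. -/
def e8bil (x y : Fin 8 → ℚ) : ℚ := -(∑ i, x i * y i)

/-- A root of `E₈` is a lattice vector of norm `-2`. -/
def IsE8Root (x : Fin 8 → ℚ) : Prop := IsE8 x ∧ e8bil x x = -2

/-- The `δ_{±i,±j}` with (1-based) `i, j ≥ 5`, i.e. supported in the last four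
coordinates. -/
def deltaTail : Set (Fin 8 → ℚ) :=
  {x | ∃ j k : Fin 8, 4 ≤ (j : ℕ) ∧ 4 ≤ (k : ℕ) ∧ j ≠ k ∧
    (x j = 1 ∨ x j = -1) ∧ (x k = 1 ∨ x k = -1) ∧ ∀ i, i ≠ j → i ≠ k → x i = 0}

/-- The vectors `±δ'_S` with all entries `±1/2`, an even number of `+1/2`
entries, with first three entries equal and the fourth entry opposite
(i.e. `1,2,3 ∈ S`, `4 ∉ S`, up to global sign). -/
def halfSpecial : Set (Fin 8 → ℚ) :=
  {x | (∀ i, x i = 1/2 ∨ x i = -1/2) ∧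
    Even (Finset.univ.filter fun i => x i = 1/2).card ∧
    x 0 = x 1 ∧ x 1 = x 2 ∧ x 3 = -x 0}

/-!
The roots of `E₈` are the 112 vectors `±eᵢ ± eⱼ` and the 128 vectors with all entries `±1/2`
and an even number of `+1/2`: norm `2` leaves no other integral or half-integral vectors.
Orthogonality to `v₁` and `v₂` reads `x₀ = x₁` and `x₁ + x₂ + 2x₃ = 0`. For an integral root
this kills the first four coordinates, since otherwise three of them would be nonzero; for a
half-integral root it forces `x₁ = x₂ = -x₃`. The two resulting families are counted by
enumerating their sign patterns.
-/

open Finset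

theorem Set.ncard_eq_card_image_filter {α β : Type*} [Fintype α] [DecidableEq β] (f : α → β)
    (s : Set β) [DecidablePred (· ∈ s)] (hs : s ⊆ Set.range f) :
    s.ncard = ((Finset.univ.filter fun a => f a ∈ s).image f).card := by
  rw [← Set.ncard_coe_finset, coe_image, coe_filter_univ]
  exact congrArg Set.ncard (Set.image_preimage_eq_of_subset hs).symm

section SignedPair

variable {ι : Type*} {x : ι → ℚ} {j k : ι}

def IsSignedPair (x : ι → ℚ) (j k : ι) : Prop :=
  j ≠ k ∧ (x j = 1 ∨ x j = -1) ∧ (x k = 1 ∨ x k = -1) ∧ ∀ i, i ≠ j → i ≠ k → x i = 0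

namespace IsSignedPair

lemma eq_zero_or_eq_one_or_eq_neg_one (h : IsSignedPair x j k) (i : ι) :
    x i = 0 ∨ x i = 1 ∨ x i = -1 := by
  by_cases hij : i = j
  · exact hij ▸ Or.inr h.2.1
  by_cases hik : i = k
  · exact hik ▸ Or.inr h.2.2.1
  exact Or.inl (h.2.2.2 i hij hik)

lemma exists_intCast_eq (h : IsSignedPair x j k) (i : ι) : ∃ n : ℤ, x i = n := by
  rcases h.eq_zero_or_eq_one_or_eq_neg_one i with hi | hi | hi
  exacts [⟨0, by simp [hi]⟩, ⟨1, by simp [hi]⟩, ⟨-1, by simp [hi]⟩]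

lemma sum_comp [Fintype ι] (h : IsSignedPair x j k) (f : ℚ → ℚ) (hf : f 0 = 0) :
    ∑ i, f (x i) = f (x j) + f (x k) :=
  sum_eq_add j k h.1 (fun i _ hi => by rw [h.2.2.2 i hi.1 hi.2, hf]) (by simp) (by simp)

lemma sum_sq [Fintype ι] (h : IsSignedPair x j k) : ∑ i, x i ^ 2 = 2 := by
  rw [h.sum_comp (· ^ 2) (by norm_num)]
  rcases h.2.1 with hj | hj <;> rcases h.2.2.1 with hk | hk <;> norm_num [hj, hk]

lemma exists_sum_eq [Fintype ι] (h : IsSignedPair x j k) : ∃ m : ℤ, ∑ i, x i = 2 * m := by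
  rw [show ∑ i, x i = x j + x k from h.sum_comp id rfl]
  rcases h.2.1 with hj | hj <;> rcases h.2.2.1 with hk | hk
  exacts [⟨1, by norm_num [hj, hk]⟩, ⟨0, by norm_num [hj, hk]⟩, ⟨0, by norm_num [hj, hk]⟩,
    ⟨-1, by norm_num [hj, hk]⟩]

end IsSignedPair

lemma exists_isSignedPair_of_sum_sq_eq_two [Fintype ι] [DecidableEq ι]
    (hx : ∀ i, ∃ n : ℤ, x i = n) (hsq : ∑ i, x i ^ 2 = 2) : ∃ j k, IsSignedPair x j k := by
  choose n hn using hx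
  obtain rfl : x = fun i => (n i : ℚ) := funext hn
  have h : ∑ i, n i ^ 2 = 2 := by beta_reduce at hsq; exact_mod_cast hsq
  have hval : ∀ i, n i = 0 ∨ n i = 1 ∨ n i = -1 := by
    intro i
    have hle : n i ^ 2 ≤ 2 := h ▸ single_le_sum (fun i _ => sq_nonneg (n i)) (mem_univ i)
    have : -1 ≤ n i ∧ n i ≤ 1 := by constructor <;> nlinarith
    omega
  have hsq : ∀ i ∈ univ, n i ^ 2 = if n i ≠ 0 then 1 else 0 := by
    intro i _
    rcases hval i with hi | hi | hi <;> simp [hi]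
  rw [sum_congr rfl hsq, sum_boole] at h
  obtain ⟨j, k, hjk, hset⟩ := card_eq_two.1 (by exact_mod_cast h)
  have hsupp : ∀ i, n i ≠ 0 ↔ i = j ∨ i = k := fun i => by
    simpa using congrArg (i ∈ ·) hset
  have hunit : ∀ i, n i ≠ 0 → ((n i : ℚ) = 1 ∨ (n i : ℚ) = -1) := fun i hi => by
    rcases hval i with h | h | h <;> simp_all
  refine ⟨j, k, hjk, hunit j ((hsupp j).2 (.inl rfl)), hunit k ((hsupp k).2 (.inr rfl)), ?_⟩
  intro i hij hik
  simpa using not_imp_comm.1 (hsupp i).1 (by tauto)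

end SignedPair

section HalfSigns

variable {ι : Type*} [Fintype ι] {x : ι → ℚ}

lemma sum_eq_card_sub_of_forall_eq_half (hx : ∀ i, x i = 1/2 ∨ x i = -1/2) :
    ∑ i, x i = #{i | x i = 1/2} - Fintype.card ι / 2 := by
  have hx' : ∀ i ∈ univ, x i = (if x i = 1/2 then 1 else 0) - 1/2 := by
    intro i _
    rcases hx i with hi | hi <;> norm_num [hi]
  rw [sum_congr rfl hx', sum_sub_distrib, sum_boole, sum_const, card_univ, nsmul_eq_mul]
  ring

lemma one_fourth_le_sq_of_eq_add_half {q : ℚ} (hq : ∃ n : ℤ, q = n + 1/2) : 1/4 ≤ q ^ 2 := by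
  obtain ⟨n, rfl⟩ := hq
  have : (0 : ℚ) ≤ n * (n + 1) := by
    exact_mod_cast (show (0 : ℤ) ≤ n * (n + 1) by rcases le_or_gt 0 n with h | h <;> nlinarith)
  nlinarith

lemma forall_eq_half_of_sum_sq (hx : ∀ i, ∃ n : ℤ, x i = n + 1/2)
    (h : ∑ i, x i ^ 2 = Fintype.card ι / 4) : ∀ i, x i = 1/2 ∨ x i = -1/2 := by
  have hsum : ∑ _i : ι, (1/4 : ℚ) = ∑ i, x i ^ 2 := by
    rw [h, sum_const, card_univ, nsmul_eq_mul]; ring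
  intro i
  have hi := (sum_eq_sum_iff_of_le fun i _ => one_fourth_le_sq_of_eq_add_half (hx i)).1 hsum i
    (mem_univ i)
  have : (x i - 1/2) * (x i + 1/2) = 0 := by linear_combination -hi
  rcases mul_eq_zero.1 this with h | h
  exacts [.inl (by linarith), .inr (by linarith)]

end HalfSigns

lemma e8bil_self_eq_neg_two_iff (x : Fin 8 → ℚ) : e8bil x x = -2 ↔ ∑ i, x i ^ 2 = 2 := by
  simp only [e8bil, sq, neg_inj]

lemma exists_sum_eq_two_mul_iff_even {x : Fin 8 → ℚ} (hx : ∀ i, x i = 1/2 ∨ x i = -1/2) :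
    (∃ m : ℤ, ∑ i, x i = 2 * m) ↔ Even #{i | x i = 1/2} := by
  rw [sum_eq_card_sub_of_forall_eq_half hx, Fintype.card_fin, ← Int.even_coe_nat]
  generalize #{i | x i = 1/2} = c
  constructor
  · rintro ⟨m, hm⟩
    exact ⟨m + 2, by qify; linarith⟩
  · rintro ⟨r, hr⟩
    exact ⟨r - 2, by qify at hr; push_cast; linarith⟩

theorem isE8Root_iff {x : Fin 8 → ℚ} :
    IsE8Root x ↔ (∃ j k, IsSignedPair x j k) ∨
      ((∀ i, x i = 1/2 ∨ x i = -1/2) ∧ Even #{i | x i = 1/2}) := by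
  rw [IsE8Root, IsE8, e8bil_self_eq_neg_two_iff]
  constructor
  · rintro ⟨⟨hint | hhalf, hsum⟩, hsq⟩
    · exact .inl (exists_isSignedPair_of_sum_sq_eq_two hint hsq)
    · have hx := forall_eq_half_of_sum_sq hhalf (by rw [hsq]; norm_num)
      exact .inr ⟨hx, (exists_sum_eq_two_mul_iff_even hx).1 hsum⟩
  · rintro (⟨j, k, h⟩ | ⟨hx, heven⟩)
    · exact ⟨⟨.inl h.exists_intCast_eq, h.exists_sum_eq⟩, h.sum_sq⟩
    · refine ⟨⟨.inr fun i => ?_, (exists_sum_eq_two_mul_iff_even hx).2 heven⟩, ?_⟩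
      · rcases hx i with h | h
        exacts [⟨0, by simp [h]⟩, ⟨-1, by norm_num [h]⟩]
      · have hsq : ∀ i ∈ univ, x i ^ 2 = 1/4 := fun i _ => by
          rcases hx i with h | h <;> norm_num [h]
        rw [sum_congr rfl hsq]
        norm_num

lemma e8bil_v1_eq_zero_iff (x : Fin 8 → ℚ) :
    e8bil x ![1, -1, 0, 0, 0, 0, 0, 0] = 0 ↔ x 0 = x 1 := by
  have : e8bil x ![1, -1, 0, 0, 0, 0, 0, 0] = x 1 - x 0 := by
    simp [e8bil, Fin.sum_univ_eight, sub_eq_add_neg]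
  rw [this, sub_eq_zero, eq_comm]

lemma e8bil_v2_eq_zero_iff (x : Fin 8 → ℚ) :
    e8bil x ![0, 1, 1, 2, 0, 0, 0, 0] = 0 ↔ x 1 + x 2 + 2 * x 3 = 0 := by
  have : e8bil x ![0, 1, 1, 2, 0, 0, 0, 0] = -(x 1 + x 2 + 2 * x 3) := by
    simp [e8bil, Fin.sum_univ_eight, mul_comm]
  rw [this, neg_eq_zero]

lemma IsSignedPair.head_eq_zero {x : Fin 8 → ℚ} {j k : Fin 8} (h : IsSignedPair x j k)
    (h1 : x 0 = x 1) (h2 : x 1 + x 2 + 2 * x 3 = 0) : ∀ i : Fin 8, (i : ℕ) < 4 → x i = 0 := by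
  have hle : x 0 ^ 2 + x 1 ^ 2 + x 2 ^ 2 + x 3 ^ 2 ≤ 2 := by
    rw [← h.sum_sq, Fin.sum_univ_eight]
    linarith [sq_nonneg (x 4), sq_nonneg (x 5), sq_nonneg (x 6), sq_nonneg (x 7)]
  have hx2 : x 2 = -x 1 - 2 * x 3 := by linarith
  rw [h1, hx2] at hle
  have hx13 : x 1 = 0 ∧ x 3 = 0 := by
    rcases h.eq_zero_or_eq_one_or_eq_neg_one 1 with e1 | e1 | e1 <;>
      rcases h.eq_zero_or_eq_one_or_eq_neg_one 3 with e3 | e3 | e3 <;>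
      first
      | exact ⟨e1, e3⟩
      | norm_num [e1, e3] at hle
  intro i hi
  fin_cases i <;> simp_all

lemma mem_deltaTail_iff {x : Fin 8 → ℚ} :
    x ∈ deltaTail ↔ ∃ j k, IsSignedPair x j k ∧ ∀ i : Fin 8, (i : ℕ) < 4 → x i = 0 := by
  constructor
  · rintro ⟨j, k, hj, hk, h⟩
    refine ⟨j, k, h, fun i hi => h.2.2.2 i ?_ ?_⟩ <;> rintro rfl <;> omega
  · rintro ⟨j, k, h, hz⟩
    have hge : ∀ i, x i = 1 ∨ x i = -1 → 4 ≤ (i : ℕ) := fun i hi =>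
      not_lt.1 fun hlt => by rcases hi with e | e <;> rw [hz i hlt] at e <;> norm_num at e
    exact ⟨j, k, hge j h.2.1, hge k h.2.2.1, h⟩

lemma mem_halfSpecial_iff {x : Fin 8 → ℚ} :
    x ∈ halfSpecial ↔ ((∀ i, x i = 1/2 ∨ x i = -1/2) ∧ Even #{i | x i = 1/2}) ∧
      x 0 = x 1 ∧ x 1 + x 2 + 2 * x 3 = 0 := by
  constructor
  · rintro ⟨hx, heven, h01, h12, h30⟩
    exact ⟨⟨hx, heven⟩, h01, by linarith⟩
  · rintro ⟨⟨hx, heven⟩, h01, h123⟩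
    have : x 1 = x 2 ∧ x 3 = -x 1 := by
      rcases hx 1 with e1 | e1 <;> rcases hx 2 with e2 | e2 <;> rcases hx 3 with e3 | e3 <;>
        constructor <;> linarith
    exact ⟨hx, heven, h01, this.1, h01 ▸ this.2⟩

theorem roots_orthogonal_v1_v2_eq :
    {x : Fin 8 → ℚ | IsE8Root x ∧
        e8bil x ![1, -1, 0, 0, 0, 0, 0, 0] = 0 ∧
        e8bil x ![0, 1, 1, 2, 0, 0, 0, 0] = 0} = deltaTail ∪ halfSpecial := by
  ext x
  simp only [Set.mem_ofPred_eq, Set.mem_union, isE8Root_iff, e8bil_v1_eq_zero_iff,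
    e8bil_v2_eq_zero_iff, mem_deltaTail_iff, mem_halfSpecial_iff]
  constructor
  · rintro ⟨⟨j, k, h⟩ | hhalf, h1, h2⟩
    exacts [.inl ⟨j, k, h, h.head_eq_zero h1 h2⟩, .inr ⟨hhalf, h1, h2⟩]
  · rintro (⟨j, k, h, hz⟩ | ⟨hhalf, h1, h2⟩)
    · exact ⟨.inl ⟨j, k, h⟩, by rw [hz 0 (by decide), hz 1 (by decide)],
        by rw [hz 1 (by decide), hz 2 (by decide), hz 3 (by decide)]; ring⟩
    · exact ⟨.inr hhalf, h1, h2⟩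

lemma disjoint_deltaTail_halfSpecial : Disjoint deltaTail halfSpecial := by
  rw [Set.disjoint_left]
  rintro x hx ⟨hhalf, -⟩
  obtain ⟨-, -, -, hz⟩ := mem_deltaTail_iff.1 hx
  rcases hhalf 0 with h | h <;> rw [hz 0 (by decide)] at h <;> norm_num at h

def signOfBool (b : Bool) : ℚ := if b then 1 else -1

lemma signOfBool_decide_eq {q : ℚ} (hq : q = 1 ∨ q = -1) : signOfBool (decide (q = 1)) = q := by
  rcases hq with rfl | rfl <;> norm_num [signOfBool]

def signedPairVec (p : Fin 8 × Fin 8 × Bool × Bool) : Fin 8 → ℚ :=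
  fun i => if i = p.1 then signOfBool p.2.2.1 else if i = p.2.1 then signOfBool p.2.2.2 else 0

def halfVec (b : Fin 8 → Bool) : Fin 8 → ℚ := fun i => signOfBool (b i) / 2

instance : DecidablePred (· ∈ deltaTail) := fun x => by unfold deltaTail; infer_instance
instance : DecidablePred (· ∈ halfSpecial) := fun x => by unfold halfSpecial; infer_instance

lemma ncard_halfSpecial : halfSpecial.ncard = 16 := by
  rw [Set.ncard_eq_card_image_filter halfVec]
  · -- plain `decide` gets stuck on the well-founded `gcd` inside `ℚ` division
    decide +kernel
  · rintro x ⟨hx, -⟩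
    refine ⟨fun i => decide (2 * x i = 1), funext fun i => ?_⟩
    have h2x : 2 * x i = 1 ∨ 2 * x i = -1 := by rcases hx i with h | h <;> norm_num [h]
    rw [halfVec, signOfBool_decide_eq h2x]
    ring

lemma ncard_deltaTail : deltaTail.ncard = 24 := by
  rw [Set.ncard_eq_card_image_filter signedPairVec]
  · decide +kernel
  · rintro x ⟨j, k, -, -, hjk, hj, hk, h0⟩
    refine ⟨(j, k, decide (x j = 1), decide (x k = 1)), funext fun i => ?_⟩
    simp only [signedPairVec]
    split_ifs with hij hik
    · rw [hij, signOfBool_decide_eq hj]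
    · rw [hik, signOfBool_decide_eq hk]
    · exact (h0 i hij hik).symm

/-- The roots of `E₈` orthogonal to `v₁ = (1,-1,0,…,0)` and
`v₂ = (0,1,1,2,0,…,0)` are exactly the 24 vectors `δ_{±i,±j}` with `i,j ≥ 5`
together with the 16 vectors `±δ'_S` with `1,2,3 ∈ S`, `4 ∉ S`, `|S|` even:
40 roots in total. -/
theorem e8_roots_orthogonal_v1_v2 :
    {x : Fin 8 → ℚ | IsE8Root x ∧
        e8bil x ![1, -1, 0, 0, 0, 0, 0, 0] = 0 ∧
        e8bil x ![0, 1, 1, 2, 0, 0, 0, 0] = 0} = deltaTail ∪ halfSpecial ∧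
    deltaTail.ncard = 24 ∧ halfSpecial.ncard = 16 ∧
    {x : Fin 8 → ℚ | IsE8Root x ∧
        e8bil x ![1, -1, 0, 0, 0, 0, 0, 0] = 0 ∧
        e8bil x ![0, 1, 1, 2, 0, 0, 0, 0] = 0}.ncard = 40 := by
  refine ⟨roots_orthogonal_v1_v2_eq, ncard_deltaTail, ncard_halfSpecial, ?_⟩
  rw [roots_orthogonal_v1_v2_eq, Set.ncard_union_eq disjoint_deltaTail_halfSpecial
    (Set.finite_of_ncard_ne_zero (by simp [ncard_deltaTail]))
    (Set.finite_of_ncard_ne_zero (by simp [ncard_halfSpecial])), ncard_deltaTail,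
    ncard_halfSpecial]
end

section
/- In the negative definite E8 lattice, the vectors v_1 = (1,-1,0,0,0,0,0,0) and v_2 = (0,1,3,0,0,0,0,0) span a sublattice with Gram matrix [[-2,1],[1,-10]], and the roots of E8 orthogonal to both v_1 and v_2 are exactly the 40 vectors δ_{±i,±j} with 4 ≤ i < j ≤ 8. -/
/-- The `δ_{±i,±j}` with (1-based) `4 ≤ i < j ≤ 8`, i.e. supported in the last
five coordinates. -/
def deltaTail5 : Set (Fin 8 → ℚ) :=
  {x | ∃ j k : Fin 8, 3 ≤ (j : ℕ) ∧ 3 ≤ (k : ℕ) ∧ j ≠ k ∧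
    (x j = 1 ∨ x j = -1) ∧ (x k = 1 ∨ x k = -1) ∧ ∀ i, i ≠ j → i ≠ k → x i = 0}

/-! Orthogonality to `v₁` and `v₂` means `x₀ = x₁ = -3 x₂`. Since `x₁² ≤ ∑ xᵢ² = 2`, this gives
`x₂² ≤ 2/9 < 1/4`, which rules out the half-integral vectors and forces `x₀ = x₁ = x₂ = 0` for the
integral ones; an integral vector of norm `2` is some `δ_{±j,±k}`, here supported in the last five
coordinates. -/

local notation "v₁" => (![1, -1, 0, 0, 0, 0, 0, 0] : Fin 8 → ℚ)
local notation "v₂" => (![0, 1, 3, 0, 0, 0, 0, 0] : Fin 8 → ℚ)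

/-- `x = δ_{±j,±k}`. -/
def IsDelta {ι : Type*} (x : ι → ℚ) (j k : ι) : Prop :=
  j ≠ k ∧ (x j = 1 ∨ x j = -1) ∧ (x k = 1 ∨ x k = -1) ∧ ∀ i, i ≠ j → i ≠ k → x i = 0

def deltaVec {ι : Type*} [DecidableEq ι] (j k : ι) (s t : ℚ) : ι → ℚ :=
  fun i => if i = j then s else if i = k then t else 0

lemma isDelta_deltaVec {ι : Type*} [DecidableEq ι] {j k : ι} {s t : ℚ} (hjk : j ≠ k)
    (hs : s = 1 ∨ s = -1) (ht : t = 1 ∨ t = -1) : IsDelta (deltaVec j k s t) j k := by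
  refine ⟨hjk, ?_, ?_, fun i hj hk => ?_⟩ <;> simp_all [deltaVec, hjk.symm]

namespace IsDelta

variable {ι : Type*} {x : ι → ℚ} {j k : ι}

lemma symm (h : IsDelta x j k) : IsDelta x k j :=
  ⟨h.1.symm, h.2.2.1, h.2.1, fun i hk hj => h.2.2.2 i hj hk⟩

lemma eq_deltaVec [DecidableEq ι] (h : IsDelta x j k) : x = deltaVec j k (x j) (x k) := by
  funext i
  unfold deltaVec
  split_ifs with hj hk
  · rw [hj]
  · rw [hk]
  · exact h.2.2.2 i hj hk

lemma exists_int (h : IsDelta x j k) (i : ι) : ∃ n : ℤ, x i = n := by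
  have : x i = 1 ∨ x i = -1 ∨ x i = 0 := by
    by_cases hj : i = j
    · subst hj; have := h.2.1; tauto
    by_cases hk : i = k
    · subst hk; have := h.2.2.1; tauto
    exact .inr (.inr (h.2.2.2 i hj hk))
  rcases this with h' | h' | h' <;> rw [h']
  exacts [⟨1, by norm_num⟩, ⟨-1, by norm_num⟩, ⟨0, by norm_num⟩]

variable [Fintype ι]

lemma exists_sum_eq_two_mul (h : IsDelta x j k) : ∃ m : ℤ, ∑ i, x i = 2 * m := by
  rw [Fintype.sum_eq_add j k h.1 fun i hi => h.2.2.2 i hi.1 hi.2]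
  rcases h.2.1 with hj | hj <;> rcases h.2.2.1 with hk | hk <;> rw [hj, hk]
  exacts [⟨1, by norm_num⟩, ⟨0, by norm_num⟩, ⟨0, by norm_num⟩, ⟨-1, by norm_num⟩]

lemma sum_sq (h : IsDelta x j k) : ∑ i, x i ^ 2 = 2 := by
  rw [Fintype.sum_eq_add j k h.1 fun i hi => by rw [h.2.2.2 i hi.1 hi.2]; ring]
  rcases h.2.1 with hj | hj <;> rcases h.2.2.1 with hk | hk <;> rw [hj, hk] <;> norm_num

end IsDelta

lemma exists_isDelta_of_sum_sq_eq_two {ι : Type*} [Fintype ι] [DecidableEq ι] {x : ι → ℚ}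
    (hx : ∀ i, ∃ n : ℤ, x i = n) (h : ∑ i, x i ^ 2 = 2) : ∃ j k, IsDelta x j k := by
  have hunit : ∀ i, x i ≠ 0 → x i = 1 ∨ x i = -1 := by
    intro i hi
    obtain ⟨n, hn⟩ := hx i
    have hle : x i ^ 2 ≤ 2 :=
      h ▸ Finset.single_le_sum (fun i _ => sq_nonneg (x i)) (Finset.mem_univ i)
    rw [hn] at hle hi ⊢
    have hn2 : n ^ 2 ≤ 2 := by exact_mod_cast hle
    rcases Int.abs_le_one_iff.1 (by nlinarith [sq_abs n, abs_nonneg n]) with rfl | rfl | rfl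
    <;> simp_all
  have hcard : (Finset.univ.filter (x · ≠ 0)).card = 2 := by
    have hsq : ∀ i, x i ^ 2 = if x i ≠ 0 then 1 else 0 := by
      intro i
      split_ifs with hi
      · rcases hunit i hi with h' | h' <;> simp [h']
      · simp_all
    rw [Finset.card_filter]
    exact_mod_cast (h ▸ Finset.sum_congr rfl fun i _ => (hsq i).symm)
  obtain ⟨j, k, hjk, hs⟩ := Finset.card_eq_two.mp hcard
  have hmem : ∀ i, x i ≠ 0 ↔ i = j ∨ i = k := fun i => by
    simpa using congrArg (i ∈ ·) hs
  refine ⟨j, k, hjk, hunit j ((hmem j).2 (.inl rfl)), hunit k ((hmem k).2 (.inr rfl)),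
    fun i hij hik => ?_⟩
  by_contra hi
  exact ((hmem i).1 hi).elim hij hik

lemma quarter_le_sq_add_half (n : ℤ) : 1 / 4 ≤ ((n : ℚ) + 1 / 2) ^ 2 := by
  have hZ : 0 ≤ n * (n + 1) := by rcases le_or_gt 0 n with h | h <;> nlinarith
  have hQ : (0 : ℚ) ≤ n * (n + 1) := by exact_mod_cast hZ
  linarith

lemma e8bil_self (x : Fin 8 → ℚ) : e8bil x x = -∑ i, x i ^ 2 := by
  simp only [e8bil, sq]

lemma e8bil_v₁ (x : Fin 8 → ℚ) : e8bil x v₁ = x 1 - x 0 := by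
  simp [e8bil, Fin.sum_univ_eight, sub_eq_add_neg, add_comm]

lemma e8bil_v₂ (x : Fin 8 → ℚ) : e8bil x v₂ = -(x 1 + 3 * x 2) := by
  simp [e8bil, Fin.sum_univ_eight, mul_comm]

lemma IsDelta.isE8Root {x : Fin 8 → ℚ} {j k : Fin 8} (h : IsDelta x j k) : IsE8Root x :=
  ⟨⟨.inl h.exists_int, h.exists_sum_eq_two_mul⟩, by rw [e8bil_self, h.sum_sq]⟩

lemma mem_deltaTail5_iff {x : Fin 8 → ℚ} :
    x ∈ deltaTail5 ↔ x 0 = 0 ∧ x 1 = 0 ∧ x 2 = 0 ∧ ∃ j k, IsDelta x j k := by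
  constructor
  · rintro ⟨j, k, hj, hk, h⟩
    have head : ∀ i : Fin 8, (i : ℕ) < 3 → x i = 0 := fun i hi =>
      h.2.2.2 i (Fin.ne_of_val_ne (by omega)) (Fin.ne_of_val_ne (by omega))
    exact ⟨head 0 (by decide), head 1 (by decide), head 2 (by decide), j, k, h⟩
  · rintro ⟨h0, h1, h2, j, k, h⟩
    have three_le : ∀ i : Fin 8, x i ≠ 0 → 3 ≤ (i : ℕ) := by
      intro i hi
      by_contra hlt
      obtain rfl | rfl | rfl : i = 0 ∨ i = 1 ∨ i = 2 := by omega
      all_goals contradiction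
    exact ⟨j, k, three_le j (by rcases h.2.1 with h' | h' <;> simp [h']),
      three_le k (by rcases h.2.2.1 with h' | h' <;> simp [h']), h⟩

lemma mem_deltaTail5_of_isE8Root {x : Fin 8 → ℚ} (hx : IsE8Root x) (h₁ : x 1 = x 0)
    (h₂ : x 1 + 3 * x 2 = 0) : x ∈ deltaTail5 := by
  obtain ⟨⟨hcoord, -⟩, hnorm⟩ := hx
  have hsq : ∑ i, x i ^ 2 = 2 := by rw [e8bil_self] at hnorm; linarith
  have hx₂ : x 2 ^ 2 < 1 / 4 := by
    have hx₁ : x 1 ^ 2 ≤ 2 :=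
      hsq ▸ Finset.single_le_sum (fun i _ => sq_nonneg (x i)) (Finset.mem_univ 1)
    rw [show x 1 = -3 * x 2 by linarith] at hx₁
    nlinarith
  rcases hcoord with hint | hhalf
  · obtain ⟨n, hn⟩ := hint 2
    have hn0 : n = 0 := by
      rw [hn] at hx₂
      have : n ^ 2 < 1 := by exact_mod_cast hx₂.trans (by norm_num : (1 / 4 : ℚ) < 1)
      exact Int.abs_lt_one_iff.1 ((sq_lt_one_iff_abs_lt_one n).1 this)
    have hx₂0 : x 2 = 0 := by rw [hn, hn0, Int.cast_zero]
    obtain ⟨j, k, h⟩ := exists_isDelta_of_sum_sq_eq_two hint hsq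
    exact mem_deltaTail5_iff.2 ⟨by linarith, by linarith, hx₂0, j, k, h⟩
  · obtain ⟨n, hn⟩ := hhalf 2
    linarith [hn ▸ quarter_le_sq_add_half n]

def deltaTail5Finset : Finset (Fin 8 → ℚ) :=
  ((Finset.univ.filter fun p : Fin 8 × Fin 8 => 3 ≤ (p.1 : ℕ) ∧ p.1 < p.2) ×ˢ
      ({1, -1} ×ˢ {1, -1} : Finset (ℚ × ℚ))).image
    fun p => deltaVec p.1.1 p.1.2 p.2.1 p.2.2

lemma deltaTail5_eq_coe_finset : deltaTail5 = deltaTail5Finset := by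
  ext x
  constructor
  · have ordered : ∀ j k : Fin 8, 3 ≤ (j : ℕ) → j < k → IsDelta x j k → x ∈ deltaTail5Finset :=
      fun j k hj hjk h => Finset.mem_image.2
        ⟨((j, k), (x j, x k)), by simp [hj, hjk, h.2.1, h.2.2.1], h.eq_deltaVec.symm⟩
    rintro ⟨j, k, hj, hk, h : IsDelta x j k⟩
    rcases lt_or_gt_of_ne h.1 with hjk | hkj
    exacts [ordered j k hj hjk h, ordered k j hk hkj h.symm]
  · simp only [deltaTail5Finset, Finset.coe_image, Set.mem_image, Finset.mem_coe,
      Finset.mem_product, Finset.mem_filter, Finset.mem_univ, true_and, Finset.mem_insert,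
      Finset.mem_singleton]
    rintro ⟨⟨⟨j, k⟩, s, t⟩, ⟨⟨hj, hjk⟩, hs, ht⟩, rfl⟩
    exact ⟨j, k, hj, le_trans hj (Fin.le_def.1 hjk.le), isDelta_deltaVec hjk.ne hs ht⟩

/-- In `E₈`, the vectors `v₁ = (1,-1,0,…,0)` and `v₂ = (0,1,3,0,…,0)` span a
sublattice with Gram matrix `[[-2,1],[1,-10]]`, and the roots of `E₈`
orthogonal to both are exactly the 40 vectors `δ_{±i,±j}` with
`4 ≤ i < j ≤ 8`. -/
theorem e8_sublattice_gram_neg2_1_1_neg10_and_orthogonal_roots :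
    (IsE8 ![1, -1, 0, 0, 0, 0, 0, 0] ∧ IsE8 ![0, 1, 3, 0, 0, 0, 0, 0]) ∧
    e8bil ![1, -1, 0, 0, 0, 0, 0, 0] ![1, -1, 0, 0, 0, 0, 0, 0] = -2 ∧
    e8bil ![1, -1, 0, 0, 0, 0, 0, 0] ![0, 1, 3, 0, 0, 0, 0, 0] = 1 ∧
    e8bil ![0, 1, 3, 0, 0, 0, 0, 0] ![0, 1, 3, 0, 0, 0, 0, 0] = -10 ∧
    {x : Fin 8 → ℚ | IsE8Root x ∧
        e8bil x ![1, -1, 0, 0, 0, 0, 0, 0] = 0 ∧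
        e8bil x ![0, 1, 3, 0, 0, 0, 0, 0] = 0} = deltaTail5 ∧
    deltaTail5.ncard = 40 := by
  have hv₁ : IsE8Root v₁ :=
    IsDelta.isE8Root (j := 0) (k := 1) ⟨by decide, .inl rfl, .inr rfl, fun i h0 h1 => by
      fin_cases i <;> simp_all⟩
  have hv₂ : IsE8 v₂ :=
    ⟨.inl fun i => ⟨(![0, 1, 3, 0, 0, 0, 0, 0] : Fin 8 → ℤ) i, by fin_cases i <;> simp⟩,
      ⟨2, by norm_num [Fin.sum_univ_succ]⟩⟩
  refine ⟨⟨hv₁.1, hv₂⟩, hv₁.2, by simp [e8bil_v₂],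
    by norm_num [e8bil_v₂, Matrix.cons_val_two], ?_, ?_⟩
  · ext x
    simp only [Set.mem_ofPred_eq, e8bil_v₁, e8bil_v₂, sub_eq_zero, neg_eq_zero]
    refine ⟨fun ⟨hx, h₁, h₂⟩ => mem_deltaTail5_of_isE8Root hx h₁ h₂, fun hx => ?_⟩
    obtain ⟨h0, h1, h2, j, k, h⟩ := mem_deltaTail5_iff.1 hx
    exact ⟨h.isE8Root, by rw [h0, h1], by rw [h1, h2]; ring⟩
  · rw [deltaTail5_eq_coe_finset, Set.ncard_coe_finset]
    decide
end
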